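/- arXiv:1401.0138 — 4 statements merged into one kernel-verified Lean document; each statement's English description precedes it below -/
import Mathlib

section
/- For any graph G with n vertices and e edges, the number of subgraphs of G isomorphic to a path with two edges (i.e., the number of paths on three vertices) is at least (2e/n)(e - n/2). -/
/-!
Each vertex `v` is the middle vertex of `binom(deg v, 2)` two-edge paths, and
`2 * binom(d, 2) + d = d²`, so `2P + 2e = ∑ deg v²`. Cauchy–Schwarz gives
`(2e)² = (∑ deg v)² ≤ n ∑ deg v² = n (2P + 2e)`, which rearranges to the bound.
-/

/-- The number of subgraphs of `G` isomorphic to a path on three vertices: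
pairs of distinct edges of `G` sharing a vertex. -/
noncomputable def pathP2Count {V : Type*} [Fintype V] [DecidableEq V]
    (G : SimpleGraph V) [DecidableRel G.Adj] : ℕ :=
  ((G.edgeFinset.powersetCard 2).filter (fun s => ∃ v : V, ∀ e ∈ s, v ∈ e)).card

open Finset

theorem Nat.two_mul_choose_two_add_self (d : ℕ) : 2 * d.choose 2 + d = d ^ 2 := by
  rw [mul_comm, Nat.choose_two_right, Nat.div_two_mul_two_of_even d.even_mul_pred_self]
  cases d <;> simp [sq, Nat.mul_succ]

namespace SimpleGraph

variable {V : Type*} [Fintype V] [DecidableEq V] (G : SimpleGraph V) [DecidableRel G.Adj]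

theorem disjoint_powersetCard_two_incidenceFinset {u v : V} (huv : u ≠ v) :
    Disjoint ((G.incidenceFinset u).powersetCard 2) ((G.incidenceFinset v).powersetCard 2) := by
  refine Finset.disjoint_left.mpr fun s hsu hsv => ?_
  rw [mem_powersetCard] at hsu hsv
  have hs : s ⊆ {s(u, v)} := fun e he => by
    simpa using G.incidenceSet_inter_incidenceSet_subset huv
      ⟨(G.mem_incidenceFinset _ _).mp (hsu.1 he), (G.mem_incidenceFinset _ _).mp (hsv.1 he)⟩
  simpa [hsu.2] using card_le_card hs

theorem pathP2Count_eq_sum_choose_degree :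
    pathP2Count G = ∑ v, (G.degree v).choose 2 := by
  have hpaths : (G.edgeFinset.powersetCard 2).filter (fun s => ∃ v : V, ∀ e ∈ s, v ∈ e)
      = univ.biUnion fun v => (G.incidenceFinset v).powersetCard 2 := by
    ext s
    simp only [mem_filter, mem_powersetCard, mem_biUnion, mem_univ, true_and, subset_iff,
      mem_incidenceFinset, incidenceSet, Set.mem_ofPred_eq, mem_edgeFinset]
    exact ⟨fun ⟨⟨hE, hcard⟩, v, hv⟩ => ⟨v, fun e he => ⟨hE he, hv e he⟩, hcard⟩,
      fun ⟨v, hs, hcard⟩ => ⟨⟨fun e he => (hs he).1, hcard⟩, v, fun e he => (hs he).2⟩⟩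
  rw [pathP2Count, hpaths, card_biUnion fun u _ v _ huv =>
    G.disjoint_powersetCard_two_incidenceFinset huv]
  simp only [card_powersetCard, card_incidenceFinset_eq_degree]

theorem two_mul_pathP2Count_add_sum_degree :
    2 * pathP2Count G + 2 * #G.edgeFinset = ∑ v, G.degree v ^ 2 := by
  simp only [pathP2Count_eq_sum_choose_degree, mul_sum, ← sum_degrees_eq_twice_card_edges,
    ← sum_add_distrib, Nat.two_mul_choose_two_add_self]

theorem two_mul_sq_card_edgeFinset_le :
    2 * #G.edgeFinset ^ 2 ≤ Fintype.card V * (pathP2Count G + #G.edgeFinset) := by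
  have hCS := sq_sum_le_card_mul_sum_sq (s := univ) (f := fun v => G.degree v)
  rw [sum_degrees_eq_twice_card_edges, ← two_mul_pathP2Count_add_sum_degree, card_univ] at hCS
  linarith

end SimpleGraph

theorem path_count_lower_bound_general {V : Type*} [Fintype V] [DecidableEq V]
    (G : SimpleGraph V) [DecidableRel G.Adj] :
    (2 * (G.edgeFinset.card : ℝ) / (Fintype.card V : ℝ)) *
      ((G.edgeFinset.card : ℝ) - (Fintype.card V : ℝ) / 2) ≤ (pathP2Count G : ℝ) := by
  rcases (Fintype.card V).eq_zero_or_pos with hV | hV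
  · simp [hV]
  have hsq : 2 * (#G.edgeFinset : ℝ) ^ 2 ≤ Fintype.card V * (pathP2Count G + #G.edgeFinset) := by
    exact_mod_cast G.two_mul_sq_card_edgeFinset_le
  rw [div_mul_eq_mul_div, div_le_iff₀ (by positivity)]
  linarith

/-- A graph with `n ≥ 1` vertices and `e` edges has at least `(2e/n)(e - n/2)`
subgraphs isomorphic to the path with two edges. -/
theorem path_count_lower_bound {V : Type*} [Fintype V] [DecidableEq V]
    (G : SimpleGraph V) [DecidableRel G.Adj] (hn : 1 ≤ Fintype.card V) :
    (2 * (G.edgeFinset.card : ℝ) / (Fintype.card V : ℝ)) *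
      ((G.edgeFinset.card : ℝ) - (Fintype.card V : ℝ) / 2) ≤ (pathP2Count G : ℝ) :=
  path_count_lower_bound_general G
end

section
/- For any finite graph G, χ(G) = min{β(H) : H is a hypergraph with KG(H) ≅ G}, where the minimum is over all hypergraphs H whose Kneser graph is isomorphic to G. -/
/-!
A covering set `S` of `H` yields a proper colouring of `KG(H)` with `|S|` colours: colour each
hyperedge by a vertex of `S` it contains, and disjoint hyperedges get different colours. Hence
`χ(G) ≤ β(H)` whenever `KG(H) ≅ G`.

Conversely, given a proper colouring `c` of `G`, represent the vertex `v` by the hyperedge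
consisting of the colour `c v` together with all non-edges `{v, w}` of `G` (loops `{v, v}`
included). Non-adjacent vertices share the non-edge `{u, v}`, while adjacent vertices share
neither a non-edge nor a colour, so this is a Kneser representation of `G`, and the colours
form a covering set of size `χ(G)`.
-/

/-- The Kneser graph of a hypergraph given by its finset of hyperedges:
vertices are the hyperedges, adjacent iff disjoint. -/
def kneserGraph {V : Type*} [DecidableEq V] (E : Finset (Finset V)) :
    SimpleGraph {e // e ∈ E} where
  Adj a b := a ≠ b ∧ Disjoint (a : Finset V) (b : Finset V)
  symm := ⟨fun _ _ h => ⟨h.1.symm, h.2.symm⟩⟩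
  loopless := ⟨fun _ h => h.1 rfl⟩

open Finset

theorem Finset.disjoint_disjSum_disjSum {α β : Type*} {s₁ s₂ : Finset α} {t₁ t₂ : Finset β} :
    Disjoint (s₁.disjSum t₁) (s₂.disjSum t₂) ↔ Disjoint s₁ s₂ ∧ Disjoint t₁ t₂ := by
  simp only [Finset.disjoint_left, Sum.forall, inl_mem_disjSum, inr_mem_disjSum]

section Cover

variable {β : Type*}

noncomputable def coverNumber (E : Finset (Finset β)) : ℕ :=
  sInf {k : ℕ | ∃ S : Finset β, (∀ e ∈ E, ∃ v ∈ S, v ∈ e) ∧ S.card = k}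

theorem coverNumber_le_card {E : Finset (Finset β)} {S : Finset β}
    (hS : ∀ e ∈ E, ∃ v ∈ S, v ∈ e) : coverNumber E ≤ S.card :=
  Nat.sInf_le ⟨S, hS, rfl⟩

theorem exists_cover_card_eq_coverNumber [Fintype β] {E : Finset (Finset β)}
    (hE : ∀ e ∈ E, e.Nonempty) :
    ∃ S : Finset β, (∀ e ∈ E, ∃ v ∈ S, v ∈ e) ∧ S.card = coverNumber E :=
  Nat.sInf_mem (s := {k | ∃ S : Finset β, (∀ e ∈ E, ∃ v ∈ S, v ∈ e) ∧ S.card = k})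
    ⟨_, univ, fun e he => (hE e he).exists_mem.imp fun v hv => ⟨mem_univ v, hv⟩, rfl⟩

variable [DecidableEq β]

theorem kneserGraph_colorable_of_cover {E : Finset (Finset β)} {S : Finset β}
    (hS : ∀ e ∈ E, ∃ v ∈ S, v ∈ e) : (kneserGraph E).Colorable S.card := by
  choose color hcolor_mem hmem_color using hS
  let C : (kneserGraph E).Coloring S :=
    .mk (fun e => ⟨color e e.2, hcolor_mem e e.2⟩) fun {e f} hef hC => by
      have hcol : color e e.2 = color f f.2 := congrArg Subtype.val hC
      exact Finset.disjoint_left.mp hef.2 (hmem_color e e.2) (hcol ▸ hmem_color f f.2)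
  simpa using C.colorable

theorem chromaticNumber_le_coverNumber [Fintype β] {V : Type*} {G : SimpleGraph V}
    {E : Finset (Finset β)} (hE : ∀ e ∈ E, e.Nonempty) (φ : kneserGraph E ≃g G) :
    G.chromaticNumber ≤ coverNumber E := by
  obtain ⟨S, hS, hcard⟩ := exists_cover_card_eq_coverNumber hE
  rw [← hcard]
  exact ((kneserGraph_colorable_of_cover hS).of_hom φ.symm.toHom).chromaticNumber_le

end Cover

theorem nonempty_kneserGraph_image_iso {V β : Type*} [Fintype V] [DecidableEq β]
    (G : SimpleGraph V) {f : V → Finset β} (hf : Function.Injective f)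
    (hdisj : ∀ u v, Disjoint (f u) (f v) ↔ G.Adj u v) :
    Nonempty (kneserGraph (univ.image f) ≃g G) := by
  let φ : V → {e // e ∈ univ.image f} := fun v => ⟨f v, mem_image_of_mem f (mem_univ v)⟩
  have hφ : Function.Bijective φ := by
    refine ⟨fun u v h => hf (congrArg Subtype.val h), ?_⟩
    rintro ⟨e, he⟩
    obtain ⟨v, -, rfl⟩ := mem_image.mp he
    exact ⟨v, rfl⟩
  refine ⟨SimpleGraph.Iso.symm ⟨Equiv.ofBijective φ hφ, fun {u v} => ?_⟩⟩
  change φ u ≠ φ v ∧ Disjoint (f u) (f v) ↔ G.Adj u v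
  rw [hdisj, and_iff_right_iff_imp]
  exact fun huv h => huv.ne (hφ.1 h)

namespace SimpleGraph

variable {V : Type*} [Fintype V] [DecidableEq V] (G : SimpleGraph V) [DecidableRel G.Adj]

def nonEdgesAt (v : V) : Finset (Sym2 V) :=
  {z | v ∈ z ∧ z ∉ G.edgeSet}

variable {G}

@[simp]
theorem mem_nonEdgesAt {v : V} {z : Sym2 V} : z ∈ G.nonEdgesAt v ↔ v ∈ z ∧ z ∉ G.edgeSet := by
  simp [nonEdgesAt]

theorem diag_mem_nonEdgesAt (v : V) : s(v, v) ∈ G.nonEdgesAt v := by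
  simp

theorem nonEdgesAt_injective : Function.Injective G.nonEdgesAt := by
  intro u v h
  have hu : s(u, u) ∈ G.nonEdgesAt v := h ▸ diag_mem_nonEdgesAt u
  simpa [eq_comm] using (mem_nonEdgesAt.mp hu).1

theorem disjoint_nonEdgesAt_iff {u v : V} :
    Disjoint (G.nonEdgesAt u) (G.nonEdgesAt v) ↔ G.Adj u v := by
  constructor
  · intro h
    by_contra hadj
    have hu : s(u, v) ∈ G.nonEdgesAt u := by simpa using hadj
    have hv : s(u, v) ∈ G.nonEdgesAt v := by simpa using hadj
    exact Finset.disjoint_left.mp h hu hv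
  · refine fun hadj => Finset.disjoint_left.mpr fun z hzu hzv => ?_
    rw [mem_nonEdgesAt] at hzu hzv
    rw [(Sym2.mem_and_mem_iff hadj.ne).mp ⟨hzu.1, hzv.1⟩] at hzu
    exact hzu.2 hadj

end SimpleGraph

theorem exists_kneserGraph_iso_coverNumber_le {V : Type*} [Fintype V] {G : SimpleGraph V} {n : ℕ}
    (hG : G.Colorable n) :
    ∃ (m : ℕ) (E : Finset (Finset (Fin m))), (∀ e ∈ E, e.Nonempty) ∧
      Nonempty (kneserGraph E ≃g G) ∧ coverNumber E ≤ n := by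
  classical
  obtain ⟨c⟩ := hG
  let φ := (Fintype.equivFin (Fin n ⊕ Sym2 V)).toEmbedding
  let f : V → Finset (Fin _) := fun v => (({c v} : Finset (Fin n)).disjSum (G.nonEdgesAt v)).map φ
  have hf : Function.Injective f := fun u v h =>
    SimpleGraph.nonEdgesAt_injective (disjSum_inj.mp (map_injective φ h)).2
  have hdisj : ∀ u v, Disjoint (f u) (f v) ↔ G.Adj u v := fun u v => by
    rw [disjoint_map, disjoint_disjSum_disjSum, SimpleGraph.disjoint_nonEdgesAt_iff,
      disjoint_singleton, and_iff_right_iff_imp]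
    exact c.valid
  have hcolor_mem : ∀ v, φ (.inl (c v)) ∈ f v := fun v =>
    mem_map_of_mem φ (inl_mem_disjSum.mpr (mem_singleton_self _))
  refine ⟨_, univ.image f, ?_, nonempty_kneserGraph_image_iso G hf hdisj, ?_⟩
  · simp only [forall_mem_image, mem_univ, forall_const]
    exact fun v => ⟨_, hcolor_mem v⟩
  · calc coverNumber (univ.image f) ≤ (univ.map (Function.Embedding.inl.trans φ)).card := by
          refine coverNumber_le_card (forall_mem_image.mpr fun v _ => ?_)
          exact ⟨_, mem_map_of_mem _ (mem_univ (c v)), hcolor_mem v⟩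
      _ = n := by simp

/-- χ(G) equals the minimum covering number β(H) over all hypergraphs H
whose Kneser graph is isomorphic to G. -/
theorem chromatic_eq_min_cover {V : Type*} [Fintype V] (G : SimpleGraph V) :
    G.chromaticNumber =
      (sInf {b : ℕ | ∃ (m : ℕ) (E : Finset (Finset (Fin m))),
        (∀ e ∈ E, e.Nonempty) ∧ Nonempty (kneserGraph E ≃g G) ∧
        b = sInf {k : ℕ | ∃ S : Finset (Fin m),
          (∀ e ∈ E, ∃ v ∈ S, v ∈ e) ∧ S.card = k}} : ℕ) := by
  obtain ⟨m, E, hE, ⟨φ⟩, hβ⟩ :=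
    exists_kneserGraph_iso_coverNumber_le G.colorable_chromaticNumber_of_fintype
  have hχ : G.chromaticNumber = coverNumber E :=
    le_antisymm (chromaticNumber_le_coverNumber hE φ)
      ((Nat.cast_le.mpr hβ).trans (ENat.natCast_toNat_le_self _))
  rw [hχ, Nat.cast_inj, eq_comm]
  refine IsLeast.csInf_eq ⟨⟨m, E, hE, ⟨φ⟩, rfl⟩, ?_⟩
  rintro _ ⟨m', E', hE', ⟨φ'⟩, rfl⟩
  exact_mod_cast hχ ▸ chromaticNumber_le_coverNumber hE' φ'
end

section
/- For any finite hypergraph H and family F of hypergraphs, the alternating Turán number satisfies ex(H, F) ≤ ex_alt(H, F) ≤ 2·ex(H, F). -/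
/-- The finset `T` of hyperedges forms (together with a suitable finite vertex
set `U`) a subhypergraph isomorphic to the member `F i` of the family `F`. -/
def IsHypCopy {V : Type*} [DecidableEq V] {ι : Type*} {β : ι → Type*}
    [∀ i, Fintype (β i)] [∀ i, DecidableEq (β i)]
    (F : ∀ i, Finset (Finset (β i))) (T : Finset (Finset V)) : Prop :=
  ∃ (i : ι) (U : Finset V) (g : V → β i),
    (∀ t ∈ T, t ⊆ U) ∧ Set.BijOn g ↑U Set.univ ∧
    T.image (Finset.image g) = F i

/-- A set of hyperedges is F-free if it contains no copy of a member of F. -/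
def HypFFree {V : Type*} [DecidableEq V] {ι : Type*} {β : ι → Type*}
    [∀ i, Fintype (β i)] [∀ i, DecidableEq (β i)]
    (F : ∀ i, Finset (Finset (β i))) (A : Finset (Finset V)) : Prop :=
  ∀ T ⊆ A, ¬ IsHypCopy F T

/-- The entries of `L` at even positions. -/
def evenEntries {α : Type*} (L : List α) : List α :=
  (L.zipIdx.filter (fun p => p.2 % 2 = 0)).map Prod.fst

/-- The entries of `L` at odd positions. -/
def oddEntries {α : Type*} (L : List α) : List α :=
  (L.zipIdx.filter (fun p => p.2 % 2 = 1)).map Prod.fst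

/-!
Fix any ordering σ of the hyperedges. Listing an F-free A ⊆ E in σ-order and colouring it
alternately gives an alternating colouring of length |A| whose colour classes lie inside A, so
ex ≤ ex_alt(σ). Conversely, the two colour classes of an alternating colouring are F-free
subsets of E, so each has at most ex hyperedges. Taking σ optimal gives both bounds.
-/

section Lists

variable {α : Type*}

lemma evenEntries_sublist (L : List α) : List.Sublist (evenEntries L) L := by
  simpa [evenEntries, List.zipIdx_map_fst] using (L.zipIdx.filter_sublist).map Prod.fst

lemma oddEntries_sublist (L : List α) : List.Sublist (oddEntries L) L := by
  simpa [oddEntries, List.zipIdx_map_fst] using (L.zipIdx.filter_sublist).map Prod.fst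

lemma length_evenEntries_add_length_oddEntries (L : List α) :
    (evenEntries L).length + (oddEntries L).length = L.length := by
  simp only [evenEntries, oddEntries, List.length_map, ← List.countP_eq_length_filter]
  simpa using (List.length_eq_countP_add_countP (fun p : α × ℕ => decide (p.2 % 2 = 0))
    (l := L.zipIdx)).symm

variable {β : Type*}

lemma nodup_of_isChain_lt_comp [Preorder β] {f : α → β} {L : List α}
    (h : L.IsChain (fun a b => f a < f b)) : L.Nodup :=
  (List.sortedLT_iff_isChain.2 (List.isChain_map f |>.2 h)).nodup.of_map f

lemma exists_isChain_lt_comp_of_finset [LinearOrder β] (σ : α ≃ β) (B : Finset α) :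
    ∃ L : List α, L.IsChain (fun a b => σ a < σ b) ∧ L.length = B.card ∧ ∀ a ∈ L, a ∈ B := by
  refine ⟨(B.map σ.toEmbedding).sort.map σ.symm, ?_, by simp, ?_⟩
  · simpa [List.isChain_map] using List.sortedLT_iff_isChain.1 (B.map σ.toEmbedding).sortedLT_sort
  · simp

end Lists

section Hypergraphs

variable {V : Type*} [DecidableEq V] {ι : Type*} {β : ι → Type*}
  [∀ i, Fintype (β i)] [∀ i, DecidableEq (β i)] {F : ∀ i, Finset (Finset (β i))}
  {E : Finset (Finset V)}

lemma HypFFree.subset {A B : Finset (Finset V)} (hA : HypFFree F A) (hBA : B ⊆ A) :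
    HypFFree F B :=
  fun T hT => hA T (hT.trans hBA)

lemma HypFFree.of_sublist {A : Finset (Finset V)} (hA : HypFFree F A)
    {L M : List {e // e ∈ E}} (hML : M.Sublist L) (hL : ∀ a ∈ L, a.1 ∈ A) :
    HypFFree F (M.map Subtype.val).toFinset :=
  hA.subset fun e he => by
    obtain ⟨a, ha, rfl⟩ := List.mem_map.1 (List.mem_toFinset.1 he)
    exact hL a (hML.subset ha)

lemma exists_alternating_of_hypFFree {γ : Type*} [LinearOrder γ] (σ : {e // e ∈ E} ≃ γ)
    {A : Finset (Finset V)} (hAE : A ⊆ E) (hA : HypFFree F A) :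
    ∃ L : List {e // e ∈ E}, L.IsChain (fun a b => σ a < σ b) ∧ L.length = A.card ∧
      HypFFree F ((evenEntries L).map Subtype.val).toFinset ∧
      HypFFree F ((oddEntries L).map Subtype.val).toFinset := by
  obtain ⟨L, hchain, hlen, hmem⟩ := exists_isChain_lt_comp_of_finset σ (A.subtype (· ∈ E))
  have hLA : ∀ a ∈ L, a.1 ∈ A := fun a ha => Finset.mem_subtype.1 (hmem a ha)
  refine ⟨L, hchain, ?_, hA.of_sublist (evenEntries_sublist L) hLA,
    hA.of_sublist (oddEntries_sublist L) hLA⟩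
  rw [hlen, Finset.card_subtype, Finset.filter_true_of_mem hAE]

lemma length_le_of_hypFFree {x : ℕ}
    (hx : x ∈ upperBounds {k : ℕ | ∃ A ⊆ E, HypFFree F A ∧ A.card = k})
    {M : List {e // e ∈ E}} (hM : M.Nodup) (hfree : HypFFree F (M.map Subtype.val).toFinset) :
    M.length ≤ x := by
  refine hx ⟨_, fun e he => ?_, hfree, ?_⟩
  · obtain ⟨a, -, rfl⟩ := List.mem_map.1 (List.mem_toFinset.1 he)
    exact a.2
  · rw [List.toFinset_card_of_nodup (hM.map Subtype.val_injective), List.length_map]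

end Hypergraphs

/-- ex(H,F) ≤ ex_alt(H,F) ≤ 2·ex(H,F).  An alternating 2-coloring of length l
w.r.t. an ordering σ is encoded by a σ-increasing list `L` of hyperedges of
length l; its red and blue classes are the entries at even and odd positions. -/
theorem ex_le_ex_alt_le_two_ex {V : Type*} [DecidableEq V] {ι : Type*} {β : ι → Type*}
    [∀ i, Fintype (β i)] [∀ i, DecidableEq (β i)]
    (E : Finset (Finset V)) (F : ∀ i, Finset (Finset (β i))) (x y : ℕ)
    (hx : IsGreatest {k : ℕ | ∃ A ⊆ E, HypFFree F A ∧ A.card = k} x)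
    (hy : IsLeast {m : ℕ | ∃ σ : {e // e ∈ E} ≃ Fin E.card,
      IsGreatest {l : ℕ | ∃ L : List {e // e ∈ E},
        L.Chain' (fun a b => σ a < σ b) ∧ L.length = l ∧
        HypFFree F ((evenEntries L).map Subtype.val).toFinset ∧
        HypFFree F ((oddEntries L).map Subtype.val).toFinset} m} y) :
    x ≤ y ∧ y ≤ 2 * x := by
  obtain ⟨σ, hσ⟩ := hy.1
  obtain ⟨A, hAE, hA, rfl⟩ := hx.1
  constructor
  · exact hσ.2 (exists_alternating_of_hypFFree σ hAE hA)
  · obtain ⟨L, hchain, rfl, heven, hodd⟩ := hσ.1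
    have hL := nodup_of_isChain_lt_comp hchain
    rw [← length_evenEntries_add_length_oddEntries, two_mul]
    exact add_le_add
      (length_le_of_hypFFree hx.2 ((evenEntries_sublist L).nodup hL) heven)
      (length_le_of_hypFFree hx.2 ((oddEntries_sublist L).nodup hL) hodd)
end

section
/- Let G be a graph with n vertices possessing a spanning subgraph whose connected components H₁, …, H_{p+1} satisfy: H₁, …, H_{p−1} are triangles and H_p, H_{p+1} ∈ {K₂, K₃}. Then χ(KG(G, P₂)) = |E(G)| − ⌊2n/3⌋. -/
/-- `s` is (the edge set of) a path with two edges in `G`: two distinct edges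
of `G` sharing a vertex. -/
def IsP2 {V : Type*} (G : SimpleGraph V) (s : Finset (Sym2 V)) : Prop :=
  ↑s ⊆ G.edgeSet ∧ s.card = 2 ∧ ∃ v : V, ∀ e ∈ s, v ∈ e

/-- The path graph KG(G, P₂): vertices are the 2-edge paths of `G`,
adjacent iff edge-disjoint. -/
def pathKneser {V : Type*} (G : SimpleGraph V) :
    SimpleGraph {s : Finset (Sym2 V) // IsP2 G s} where
  Adj a b := a ≠ b ∧ Disjoint (a : Finset (Sym2 V)) (b : Finset (Sym2 V))
  symm := ⟨fun _ _ h => ⟨h.1.symm, h.2.symm⟩⟩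
  loopless := ⟨fun _ h => h.1 rfl⟩

/-! A colour class of `KG(G, P₂)` is an intersecting family of 2-sets of edges, hence either a star
around an edge or a family of at most three paths. Deleting the star centres leaves a graph `H`
whose 2-edge paths all carry non-star colours, so `H` has at most `3t` of them, `t` the number of
non-star colours. Since `3d ≤ 4 + 2·(d choose 2)`, this gives `3|E(H)| ≤ 2n + 3t`, hence
`|E(G)| ≤ χ + ⌊2n/3⌋` for every graph `G`.

Conversely, colour a path by one of its edges not inside a part of the factor, or else by the
triangle containing it. This uses `|E(G)| − Σ_C (|C| − 1)` colours, and `Σ_C (|C| − 1) = ⌊2n/3⌋`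
as at most two parts are edges. -/

open Finset SimpleGraph

lemma card_le_three_of_subset_intersecting {α : Type*} [DecidableEq α] {𝒜 : Set (Finset α)}
    (h𝒜 : 𝒜.Intersecting) (h2 : ∀ s ∈ 𝒜, #s = 2) (hnotstar : ∀ a, ∃ s ∈ 𝒜, a ∉ s)
    {F : Finset (Finset α)} (hF : ↑F ⊆ 𝒜) : #F ≤ 3 := by
  obtain rfl | ⟨s₁, hs₁⟩ := F.eq_empty_or_nonempty
  · simp
  replace hs₁ := hF hs₁
  obtain ⟨a, b, -, rfl⟩ := card_eq_two.1 (h2 s₁ hs₁)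
  obtain ⟨s₂, hs₂, has₂⟩ := hnotstar a
  obtain ⟨s₃, hs₃, hbs₃⟩ := hnotstar b
  have hT : #({a, b} ∪ s₂) ≤ 3 := by
    have := card_union_add_card_inter {a, b} s₂
    have := card_pos.2 (not_disjoint_iff_nonempty_inter.1 (h𝒜 hs₁ hs₂))
    rw [h2 _ hs₁, h2 _ hs₂] at *
    omega
  -- a member with a point outside `{a, b} ∪ s₂` has its other point in `s₁ ∩ s₂ ∩ s₃ = ∅`
  have hsub : ∀ s ∈ F, s ⊆ {a, b} ∪ s₂ := by
    intro s hs
    replace hs := hF hs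
    obtain ⟨c, d, -, rfl⟩ := card_eq_two.1 (h2 s₂ hs₂)
    obtain ⟨e, f, -, rfl⟩ := card_eq_two.1 (h2 s₃ hs₃)
    obtain ⟨x, y, -, rfl⟩ := card_eq_two.1 (h2 s hs)
    have h₁ := h𝒜 hs hs₁; have h₂ := h𝒜 hs hs₂; have h₃ := h𝒜 hs hs₃
    have h₁₂ := h𝒜 hs₁ hs₂; have h₁₃ := h𝒜 hs₁ hs₃; have h₂₃ := h𝒜 hs₂ hs₃
    simp only [not_disjoint_iff, mem_insert, mem_singleton, exists_eq_or_imp, exists_eq_left]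
      at has₂ hbs₃ h₁ h₂ h₃ h₁₂ h₁₃ h₂₃
    simp only [insert_subset_iff, singleton_subset_iff, mem_union, mem_insert, mem_singleton]
    grind
  calc #F ≤ #(({a, b} ∪ s₂).powersetCard 2) :=
        card_le_card fun s hs => mem_powersetCard.2 ⟨hsub s hs, h2 s (hF hs)⟩
    _ ≤ (3 : ℕ).choose 2 := by rw [card_powersetCard]; exact Nat.choose_le_choose 2 hT
    _ = 3 := rfl

lemma intersecting_setOf_card_eq_two_subset {α : Type*} [DecidableEq α] {T : Finset α}
    (hT : #T ≤ 3) : {s : Finset α | #s = 2 ∧ s ⊆ T}.Intersecting := by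
  rintro s ⟨hs, hsT⟩ t ⟨ht, htT⟩ hst
  have := card_le_card (union_subset hsT htT)
  rw [card_union_of_disjoint hst] at this
  omega

lemma card_filter_not_isDiag_sym2 {α : Type*} [DecidableEq α] (s : Finset α) :
    #{e ∈ s.sym2 | ¬e.IsDiag} = (#s).choose 2 := by
  rw [sym2_eq_image, Sym2.filter_image_mk_not_isDiag, Sym2.card_image_offDiag]

lemma three_mul_le_four_add_two_mul_choose_two (d : ℕ) : 3 * d ≤ 4 + 2 * d.choose 2 := by
  induction d with
  | zero => simp
  | succ d ih =>
    simp only [Nat.choose_succ_succ', Nat.choose_one_right, Nat.reduceAdd]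
    rcases Nat.lt_or_ge d 2 with hd | hd
    · interval_cases d <;> decide
    · omega

lemma sum_sub_one_eq_two_mul_sum_div_three {ι : Type*} {s : Finset ι} {f : ι → ℕ}
    (hf : ∀ i ∈ s, f i = 2 ∨ f i = 3) (h2 : #{i ∈ s | f i = 2} ≤ 2) :
    ∑ i ∈ s, (f i - 1) = 2 * (∑ i ∈ s, f i) / 3 := by
  have key : ∑ i ∈ s, (3 * (f i - 1) + if f i = 2 then 1 else 0) = ∑ i ∈ s, 2 * f i :=
    sum_congr rfl fun i hi => by rcases hf i hi with h | h <;> simp [h]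
  rw [sum_add_distrib, ← mul_sum, ← mul_sum, ← card_filter] at key
  omega

namespace SimpleGraph

variable {V : Type*}

lemma IsClique.filter_not_isDiag_sym2_subset_edgeFinset [Fintype V] [DecidableEq V]
    {G : SimpleGraph V} [DecidableRel G.Adj] {C : Finset V} (hC : G.IsClique (C : Set V)) :
    {e ∈ C.sym2 | ¬e.IsDiag} ⊆ G.edgeFinset := by
  intro e he
  induction e with | _ a b =>
  simp only [mem_filter, Finset.mk_mem_sym2_iff, Sym2.mk_isDiag_iff] at he
  exact mem_edgeFinset.2 (hC he.1.1 he.1.2 he.2)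

lemma three_mul_card_edgeFinset_le [Fintype V] [DecidableEq V] (H : SimpleGraph V)
    [DecidableRel H.Adj] :
    3 * #H.edgeFinset ≤ 2 * Fintype.card V + ∑ v, (H.degree v).choose 2 := by
  have hdeg := H.sum_degrees_eq_twice_card_edges
  have := sum_le_sum fun v (_ : v ∈ univ) =>
    three_mul_le_four_add_two_mul_choose_two (H.degree v)
  rw [← mul_sum, sum_add_distrib, ← mul_sum, sum_const, card_univ, smul_eq_mul] at this
  omega

end SimpleGraph

section PathKneser

variable {V : Type*}

lemma IsP2.mono {G H : SimpleGraph V} (hHG : H ≤ G) {s : Finset (Sym2 V)} (hs : IsP2 H s) :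
    IsP2 G s :=
  ⟨hs.1.trans (edgeSet_mono hHG), hs.2⟩

lemma sum_choose_two_degree_le_card_isP2 [Fintype V] [DecidableEq V] (H : SimpleGraph V)
    [DecidableRel H.Adj] : ∑ v, (H.degree v).choose 2 ≤ Nat.card {s // IsP2 H s} := by
  classical
  set W : V → Finset (Finset (Sym2 V)) := fun v => (H.incidenceFinset v).powersetCard 2
  -- two distinct edges share at most one vertex
  have hW : ((univ : Finset V) : Set V).PairwiseDisjoint W := by
    intro v _ w _ hvw
    rw [Function.onFun, Finset.disjoint_left]
    intro s hv hw
    obtain ⟨hsv, hs2⟩ := mem_powersetCard.1 hv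
    obtain ⟨e, f, hef, rfl⟩ := card_eq_two.1 hs2
    have hsw := (mem_powersetCard.1 hw).1
    simp only [insert_subset_iff, singleton_subset_iff, mem_incidenceFinset,
      incidenceSet, Set.mem_ofPred_eq] at hsv hsw
    exact hef (((Sym2.mem_and_mem_iff hvw).1 ⟨hsv.1.2, hsw.1.2⟩).trans
      ((Sym2.mem_and_mem_iff hvw).1 ⟨hsv.2.2, hsw.2.2⟩).symm)
  have hWP2 : univ.biUnion W ⊆ ({s | IsP2 H s} : Finset (Finset (Sym2 V))) := by
    intro s hs
    obtain ⟨v, -, hv⟩ := mem_biUnion.1 hs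
    obtain ⟨hsv, hs2⟩ := mem_powersetCard.1 hv
    refine mem_filter.2 ⟨mem_univ _, fun e he => ?_, hs2, v, fun e he => ?_⟩
    · exact (H.incidenceSet_subset v) ((mem_incidenceFinset _ _ _).1 (hsv he))
    · exact ((mem_incidenceFinset _ _ _).1 (hsv he)).2
  calc ∑ v, (H.degree v).choose 2 = #(univ.biUnion W) := by
        simp [card_biUnion hW, W, card_powersetCard, card_incidenceFinset_eq_degree]
    _ ≤ #({s | IsP2 H s} : Finset (Finset (Sym2 V))) := card_le_card hWP2
    _ = Nat.card {s // IsP2 H s} := by rw [Nat.card_eq_fintype_card, Fintype.card_subtype]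

lemma intersecting_image_val_colorClass [DecidableEq V] {α : Type*} {G : SimpleGraph V}
    (c : (pathKneser G).Coloring α) (i : α) :
    (Subtype.val '' c.colorClass i).Intersecting := by
  rintro _ ⟨s, hs, rfl⟩ _ ⟨t, ht, rfl⟩ hst
  by_cases hne : s = t
  · subst hne
    have h2 := s.2.2.1
    rw [(disjoint_self_iff_empty _).1 hst] at h2
    simp at h2
  · exact c.valid ⟨hne, hst⟩ (hs.trans ht.symm)

lemma colorable_pathKneser_of_forall_exists_mem [DecidableEq V] {α : Type*} [Fintype α]
    (G : SimpleGraph V)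
    (cls : α → Set (Finset (Sym2 V))) (hcls : ∀ i, (cls i).Intersecting)
    (hcover : ∀ s, IsP2 G s → ∃ i, s ∈ cls i) : (pathKneser G).Colorable (Fintype.card α) := by
  choose f hf using fun s : {s // IsP2 G s} => hcover s.1 s.2
  refine (Coloring.mk f fun {a b} (hab : (pathKneser G).Adj a b) hfab => ?_).colorable
  exact hcls (f a) (hf a) (hfab ▸ hf b) hab.2

end PathKneser

section Bounds

variable {V : Type*} [Fintype V] [DecidableEq V] (G : SimpleGraph V) [DecidableRel G.Adj]

lemma colorable_pathKneser_of_pairwiseDisjoint {P : Finset (Finset V)}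
    (hP : (P : Set (Finset V)).PairwiseDisjoint id) (hcard : ∀ C ∈ P, #C ≤ 3) :
    (pathKneser G).Colorable
      (#(G.edgeFinset \ P.biUnion fun C => {e ∈ C.sym2 | ¬e.IsDiag}) + #{C ∈ P | #C = 3}) := by
  set inner : Finset V → Finset (Sym2 V) := fun C => {e ∈ C.sym2 | ¬e.IsDiag}
  set L := P.biUnion inner
  set T := {C ∈ P | #C = 3}
  have hcover : ∀ s, IsP2 G s → ∃ i : ↥(G.edgeFinset \ L) ⊕ ↥T,
      s ∈ Sum.elim (fun e => {s | e.1 ∈ s}) (fun C => {s | #s = 2 ∧ s ⊆ inner C.1}) i := by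
    intro s hs
    by_cases hsL : ∃ e ∈ s, e ∉ L
    · obtain ⟨e, hes, heL⟩ := hsL
      exact ⟨.inl ⟨e, mem_sdiff.2 ⟨mem_edgeFinset.2 (hs.1 hes), heL⟩⟩, hes⟩
    push Not at hsL
    obtain ⟨-, hs2, v, hv⟩ := hs
    obtain ⟨e₀, he₀⟩ := card_pos.1 (hs2 ▸ two_pos)
    obtain ⟨C, hC, he₀C⟩ := mem_biUnion.1 (hsL e₀ he₀)
    have hsC : s ⊆ inner C := by
      intro e he
      obtain ⟨D, hD, heD⟩ := mem_biUnion.1 (hsL e he)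
      have hvC := mem_sym2_iff.1 (mem_filter.1 he₀C).1 v (hv e₀ he₀)
      have hvD := mem_sym2_iff.1 (mem_filter.1 heD).1 v (hv e he)
      rwa [hP.elim_finset hC hD v hvC hvD]
    have hC3 : #C = 3 := by
      have := card_le_card hsC
      rw [card_filter_not_isDiag_sym2, hs2] at this
      have := hcard C hC
      interval_cases h : #C <;> simp_all
    exact ⟨.inr ⟨C, mem_filter.2 ⟨hC, hC3⟩⟩, hs2, hsC⟩
  have hcol := colorable_pathKneser_of_forall_exists_mem G _ (by
    rintro (e | C)
    · exact fun s hs t ht => not_disjoint_iff.2 ⟨e.1, hs, ht⟩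
    · apply intersecting_setOf_card_eq_two_subset
      rw [card_filter_not_isDiag_sym2, (mem_filter.1 C.2).2]
      rfl) hcover
  rwa [Fintype.card_sum, Fintype.card_coe, Fintype.card_coe] at hcol

lemma chromaticNumber_pathKneser_add_sum_le {P : Finset (Finset V)}
    (hP : (P : Set (Finset V)).PairwiseDisjoint id) (hclique : ∀ C ∈ P, G.IsClique (C : Set V))
    (hcard : ∀ C ∈ P, #C ≤ 3) :
    (pathKneser G).chromaticNumber + (∑ C ∈ P, (#C - 1) : ℕ) ≤ #G.edgeFinset := by
  set inner : Finset V → Finset (Sym2 V) := fun C => {e ∈ C.sym2 | ¬e.IsDiag}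
  set L := P.biUnion inner
  set T := {C ∈ P | #C = 3}
  have hL : L ⊆ G.edgeFinset :=
    biUnion_subset.2 fun C hC => (hclique C hC).filter_not_isDiag_sym2_subset_edgeFinset
  have hinner : (P : Set (Finset V)).PairwiseDisjoint inner := by
    intro C hC D hD hCD
    rw [Function.onFun, Finset.disjoint_left]
    intro e heC heD
    induction e with | _ a b =>
    simp only [inner, mem_filter, Finset.mk_mem_sym2_iff] at heC heD
    exact hCD (hP.elim_finset hC hD a heC.1.1 heD.1.1)
  -- a part `C` accounts for `#C - 1` of its `(#C).choose 2` edges, plus one if it is a triangle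
  have hparts : #T + ∑ C ∈ P, (#C - 1) ≤ #L := by
    rw [card_biUnion hinner, card_filter, ← sum_add_distrib]
    refine sum_le_sum fun C hC => ?_
    rw [card_filter_not_isDiag_sym2]
    have := hcard C hC
    interval_cases #C <;> decide
  have hcount : #(G.edgeFinset \ L) + #T + ∑ C ∈ P, (#C - 1) ≤ #G.edgeFinset := by
    rw [card_sdiff_of_subset hL]
    have := card_le_card hL
    omega
  calc (pathKneser G).chromaticNumber + (∑ C ∈ P, (#C - 1) : ℕ)
      ≤ ((#(G.edgeFinset \ L) + #T : ℕ) : ℕ∞) + (∑ C ∈ P, (#C - 1) : ℕ) := by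
        gcongr
        exact (colorable_pathKneser_of_pairwiseDisjoint G hP hcard).chromaticNumber_le
    _ ≤ #G.edgeFinset := by exact_mod_cast hcount

lemma card_edgeFinset_le_of_colorable_pathKneser {k : ℕ} (hk : (pathKneser G).Colorable k) :
    #G.edgeFinset ≤ k + 2 * Fintype.card V / 3 := by
  classical
  obtain ⟨c⟩ := hk
  let IsStar (i : Fin k) : Prop := ∃ e, ∀ s, c s = i → e ∈ s.1
  choose center hcenter using fun i : {i // IsStar i} => i.2
  set S := univ.image center
  set H := G.deleteEdges S
  have hS : #S ≤ #{i | IsStar i} := card_image_le.trans (Fintype.card_subtype _).le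
  have hGH : #G.edgeFinset ≤ #H.edgeFinset + #S := by
    rw [edgeFinset_deleteEdges]
    exact card_le_card_sdiff_add_card
  have hH : Nat.card {s // IsP2 H s} ≤ 3 * #{i | ¬IsStar i} := by
    let ι (s : {s // IsP2 H s}) : {s // IsP2 G s} := ⟨s.1, s.2.mono (G.deleteEdges_le _)⟩
    rw [Nat.card_eq_fintype_card, ← card_univ]
    refine card_le_mul_card_image_of_maps_to (f := fun s => c (ι s)) (fun s _ => ?_) 3
      fun i hi => ?_
    · refine mem_filter.2 ⟨mem_univ _, fun hstar => ?_⟩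
      have hcs := hcenter ⟨_, hstar⟩ (ι s) rfl
      have hcH : center ⟨_, hstar⟩ ∈ G.edgeSet \ ↑S := edgeSet_deleteEdges (G := G) _ ▸ s.2.1 hcs
      exact hcH.2 (mem_coe.2 (mem_image_of_mem center (mem_univ _)))
    · have hnotstar : ∀ e, ∃ t ∈ Subtype.val '' c.colorClass i, e ∉ t := by
        simpa [IsStar, Coloring.colorClass] using (mem_filter.1 hi).2
      rw [← card_image_of_injective _ Subtype.val_injective]
      refine card_le_three_of_subset_intersecting (intersecting_image_val_colorClass c i)
        ?_ hnotstar ?_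
      · rintro _ ⟨t, -, rfl⟩
        exact t.2.2.1
      · intro t ht
        obtain ⟨s, hs, rfl⟩ := mem_image.1 ht
        exact ⟨ι s, (mem_filter.1 hs).2, rfl⟩
  have := three_mul_card_edgeFinset_le H
  have := sum_choose_two_degree_le_card_isP2 H
  have := card_filter_add_card_filter_not (s := univ) fun i => IsStar i
  rw [card_univ, Fintype.card_fin] at this
  omega

lemma card_edgeFinset_le_chromaticNumber_pathKneser_add :
    (#G.edgeFinset : ℕ∞) ≤ (pathKneser G).chromaticNumber + (2 * Fintype.card V / 3 : ℕ) := by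
  have : ((#G.edgeFinset - 2 * Fintype.card V / 3 : ℕ) : ℕ∞) ≤ (pathKneser G).chromaticNumber :=
    le_chromaticNumber_iff_colorable.2 fun k hk => by
      have := card_edgeFinset_le_of_colorable_pathKneser G hk
      exact_mod_cast (by omega : #G.edgeFinset - 2 * Fintype.card V / 3 ≤ k)
  calc (#G.edgeFinset : ℕ∞)
      ≤ ((#G.edgeFinset - 2 * Fintype.card V / 3 : ℕ) : ℕ∞) + (2 * Fintype.card V / 3 : ℕ) := by
        exact_mod_cast (by omega)
    _ ≤ _ := by gcongr

end Bounds

theorem chromatic_pathKneser_of_triangle_factor_general {V : Type*} [Fintype V] [DecidableEq V]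
    (G : SimpleGraph V) [DecidableRel G.Adj]
    (P : Finset (Finset V)) (A B : Finset V)
    (hdisj : ∀ C ∈ P, ∀ D ∈ P, C ≠ D → Disjoint C D)
    (hcover : ∀ v : V, ∃ C ∈ P, v ∈ C)
    (htri : ∀ C ∈ P, C ≠ A → C ≠ B → C.card = 3 ∧ G.IsClique ↑C)
    (hA' : (A.card = 2 ∨ A.card = 3) ∧ G.IsClique ↑A)
    (hB' : (B.card = 2 ∨ B.card = 3) ∧ G.IsClique ↑B) :
    (pathKneser G).chromaticNumber + ((2 * Fintype.card V / 3 : ℕ) : ℕ∞) =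
      (G.edgeFinset.card : ℕ∞) := by
  have hP : (P : Set (Finset V)).PairwiseDisjoint id := fun C hC D hD => hdisj C hC D hD
  have hparts : ∀ C ∈ P, (#C = 2 ∨ #C = 3) ∧ G.IsClique (C : Set V) := by
    intro C hC
    by_cases hCA : C = A
    · exact hCA ▸ hA'
    by_cases hCB : C = B
    · exact hCB ▸ hB'
    exact (htri C hC hCA hCB).imp_left Or.inr
  have hpairs : #{C ∈ P | #C = 2} ≤ 2 := by
    refine (card_le_card fun C hC => ?_).trans (card_le_two (a := A) (b := B))
    by_contra hCAB
    simp only [mem_insert, mem_singleton, not_or] at hCAB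
    have := (htri C (mem_filter.1 hC).1 hCAB.1 hCAB.2).1
    simp_all
  have hn : Fintype.card V = ∑ C ∈ P, #C := by
    rw [← card_univ, ← eq_univ_of_forall (s := P.biUnion id) fun v => mem_biUnion.2 (hcover v),
      card_biUnion hP]
    rfl
  have hsum : ∑ C ∈ P, (#C - 1) = 2 * Fintype.card V / 3 :=
    hn ▸ sum_sub_one_eq_two_mul_sum_div_three (fun C hC => (hparts C hC).1) hpairs
  refine le_antisymm ?_ (card_edgeFinset_le_chromaticNumber_pathKneser_add G)
  simpa only [hsum] using chromaticNumber_pathKneser_add_sum_le G hP (fun C hC => (hparts C hC).2)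
    fun C hC => by have := (hparts C hC).1; omega

/-- If the vertex set of `G` partitions into parts spanning cliques of `G`,
all triangles except the last two parts which are each a `K₂` or a `K₃`, then
χ(KG(G, P₂)) = |E(G)| − ⌊2n/3⌋. -/
theorem chromatic_pathKneser_of_triangle_factor {V : Type*} [Fintype V] [DecidableEq V]
    (G : SimpleGraph V) [DecidableRel G.Adj]
    (P : Finset (Finset V)) (A B : Finset V)
    (hA : A ∈ P) (hB : B ∈ P) (hAB : A ≠ B)
    (hdisj : ∀ C ∈ P, ∀ D ∈ P, C ≠ D → Disjoint C D)
    (hcover : ∀ v : V, ∃ C ∈ P, v ∈ C)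
    (htri : ∀ C ∈ P, C ≠ A → C ≠ B → C.card = 3 ∧ G.IsClique ↑C)
    (hA' : (A.card = 2 ∨ A.card = 3) ∧ G.IsClique ↑A)
    (hB' : (B.card = 2 ∨ B.card = 3) ∧ G.IsClique ↑B) :
    (pathKneser G).chromaticNumber + ((2 * Fintype.card V / 3 : ℕ) : ℕ∞) =
      (G.edgeFinset.card : ℕ∞) :=
  chromatic_pathKneser_of_triangle_factor_general G P A B hdisj hcover htri hA' hB'
end
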